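/- The Jacobi triple product identity holds: ∑_{k∈ℤ} (-z)^k p^{k(k-1)/2} = θ(z;p) · ∏_{j=1}^∞ (1 - p^j) for all z ∈ ℂ\{0}. -/

import Mathlib

/-!
Multiplying out `∏_{j<2n} (1 + X q^j)` by the q-binomial theorem and substituting `X = -z q^{-n}`
gives the finite identity
`∏_{j<n} (1 - z q^j)(1 - q^{j+1}/z) = ∑_{|m| ≤ n} [2n, n+m]_q (-z)^m q^{m(m-1)/2}`.
As `n → ∞` the central Gaussian binomials `[2n, n+m]_q = (q;q)_{2n} / ((q;q)_{n+m} (q;q)_{n-m})`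
tend to `1 / (q;q)_∞` and stay uniformly bounded, so Tannery's theorem (dominated convergence for
series) passes to the limit. The argument works over any complete normed field with `0 < ‖q‖ < 1`.
-/

/-- The normalized Jacobi theta function
`θ(z;p) = ∏_{j=0}^∞ (1 - z p^j)(1 - p^{j+1}/z)`. -/
noncomputable def theta (p : ℝ) (z : ℂ) : ℂ :=
  ∏' j : ℕ, ((1 - z * (p : ℂ) ^ j) * (1 - (p : ℂ) ^ (j + 1) / z))

open Filter Finset Topology

section CommRing

variable {R : Type*} [CommRing R] (q : R)

/-- The q-Pochhammer symbol `(q;q)_n`. -/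
def qPochhammer (n : ℕ) : R := ∏ i ∈ range n, (1 - q ^ (i + 1))

/-- The Gaussian binomial coefficient, defined through the q-Pascal rule so that no division
is needed. -/
def gaussBinom : ℕ → ℕ → R
  | _, 0 => 1
  | 0, _ + 1 => 0
  | n + 1, k + 1 => gaussBinom n k + q ^ (k + 1) * gaussBinom n (k + 1)

theorem qPochhammer_succ (n : ℕ) : qPochhammer q (n + 1) = qPochhammer q n * (1 - q ^ (n + 1)) :=
  prod_range_succ _ n

theorem gaussBinom_zero_right (n : ℕ) : gaussBinom q n 0 = 1 := by cases n <;> rfl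

theorem gaussBinom_succ_succ (n k : ℕ) :
    gaussBinom q (n + 1) (k + 1) = gaussBinom q n k + q ^ (k + 1) * gaussBinom q n (k + 1) :=
  rfl

theorem gaussBinom_eq_zero_of_lt : ∀ {n k : ℕ}, n < k → gaussBinom q n k = 0
  | 0, _ + 1, _ => rfl
  | n + 1, k + 1, h => by
    rw [gaussBinom_succ_succ, gaussBinom_eq_zero_of_lt (by omega),
      gaussBinom_eq_zero_of_lt (by omega), mul_zero, add_zero]

theorem gaussBinom_self : ∀ n : ℕ, gaussBinom q n n = 1
  | 0 => rfl
  | n + 1 => by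
    rw [gaussBinom_succ_succ, gaussBinom_self n, gaussBinom_eq_zero_of_lt q n.lt_succ_self,
      mul_zero, add_zero]

theorem gaussBinom_mul_qPochhammer_mul_qPochhammer : ∀ {n k : ℕ}, k ≤ n →
    gaussBinom q n k * qPochhammer q k * qPochhammer q (n - k) = qPochhammer q n
  | n, 0, _ => by simp [gaussBinom_zero_right, qPochhammer]
  | n + 1, k + 1, h => by
    obtain rfl | hk := (Nat.le_of_succ_le_succ h).eq_or_lt
    · simp [gaussBinom_self, qPochhammer]
    obtain ⟨d, rfl⟩ : ∃ d, n = k + 1 + d := ⟨n - (k + 1), by omega⟩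
    have h₁ := gaussBinom_mul_qPochhammer_mul_qPochhammer (n := k + 1 + d) (k := k) (by omega)
    have h₂ := gaussBinom_mul_qPochhammer_mul_qPochhammer (n := k + 1 + d) (k := k + 1) (by omega)
    rw [show k + 1 + d - k = d + 1 by omega, qPochhammer_succ] at h₁
    rw [show k + 1 + d - (k + 1) = d by omega, qPochhammer_succ] at h₂
    rw [show k + 1 + d + 1 - (k + 1) = d + 1 by omega, gaussBinom_succ_succ, qPochhammer_succ,
      qPochhammer_succ, qPochhammer_succ]
    linear_combination (1 - q ^ (k + 1)) * h₁ + q ^ (k + 1) * (1 - q ^ (d + 1)) * h₂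

theorem prod_one_add_mul_pow_eq_sum (n : ℕ) (X : R) :
    ∏ j ∈ range n, (1 + X * q ^ j) =
      ∑ k ∈ range (n + 1), gaussBinom q n k * q ^ k.choose 2 * X ^ k := by
  induction n generalizing X with
  | zero => simp [gaussBinom_zero_right]
  | succ n ih =>
    have hchoose (k : ℕ) : (k + 1).choose 2 = k.choose 2 + k := by
      rw [Nat.choose_succ_succ, Nat.choose_one_right, add_comm]
    set a : ℕ → R := fun k => gaussBinom q n k * q ^ (k + 1).choose 2 * X ^ k with ha
    have hshift : ∏ j ∈ range n, (1 + X * q ^ (j + 1)) = ∑ k ∈ range (n + 1), a k := by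
      simp_rw [pow_succ', ← mul_assoc, ih (X * q), ha, hchoose]
      exact sum_congr rfl fun k _ => by ring
    have hS : ∑ k ∈ range (n + 1), a k = ∑ k ∈ range (n + 1), a (k + 1) + 1 := by
      rw [sum_range_succ', sum_range_succ, ha]
      simp [gaussBinom_eq_zero_of_lt q n.lt_succ_self, gaussBinom_zero_right]
    have hterm (k : ℕ) : gaussBinom q (n + 1) (k + 1) * q ^ (k + 1).choose 2 * X ^ (k + 1) =
        X * a k + a (k + 1) := by
      simp only [ha, gaussBinom_succ_succ, hchoose]
      ring
    rw [prod_range_succ', hshift,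
      sum_range_succ' (fun k => gaussBinom q (n + 1) k * q ^ k.choose 2 * X ^ k),
      sum_congr rfl fun k _ => hterm k, sum_add_distrib, ← mul_sum, hS, gaussBinom_zero_right,
      Nat.choose_zero_succ]
    ring

end CommRing

section Field

variable {K : Type*} [Field K] {q z : K}

/-- The exponent `m(m-1)` is even, so the integer division is exact. -/
def jacobiTerm (q z : K) (m : ℤ) : K := (-z) ^ m * q ^ (m * (m - 1) / 2)

theorem jacobiTerm_zero : jacobiTerm q z 0 = 1 := by simp [jacobiTerm]

theorem jacobiTerm_add_one (hq : q ≠ 0) (hz : z ≠ 0) (m : ℤ) :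
    jacobiTerm q z (m + 1) = jacobiTerm q z m * (-z * q ^ m) := by
  have hexp : (m + 1) * (m + 1 - 1) / 2 = m * (m - 1) / 2 + m := by
    rw [show (m + 1) * (m + 1 - 1) = m * (m - 1) + m * 2 by ring,
      Int.add_mul_ediv_right _ _ two_ne_zero]
  rw [jacobiTerm, jacobiTerm, hexp, zpow_add_one₀ (neg_ne_zero.mpr hz), zpow_add₀ hq]
  ring

theorem jacobiTerm_add_natCast (hq : q ≠ 0) (hz : z ≠ 0) (m : ℤ) (k : ℕ) :
    jacobiTerm q z (m + k) = jacobiTerm q z m * q ^ k.choose 2 * (-z * q ^ m) ^ k := by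
  induction k with
  | zero => simp
  | succ k ih =>
    rw [Nat.cast_succ, ← add_assoc, jacobiTerm_add_one hq hz, ih, zpow_add₀ hq, zpow_natCast,
      Nat.choose_succ_succ, Nat.choose_one_right]
    ring

theorem jacobiTerm_neg (hq : q ≠ 0) (m : ℤ) : jacobiTerm q z (-m) = jacobiTerm q (q / z) m := by
  have hexp : -m * (-m - 1) / 2 = m * (m - 1) / 2 + m := by
    rw [show -m * (-m - 1) = m * (m - 1) + m * 2 by ring, Int.add_mul_ediv_right _ _ two_ne_zero]
  rw [jacobiTerm, jacobiTerm, hexp, zpow_add₀ hq, zpow_neg, ← inv_zpow,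
    show -(q / z) = q * (-z)⁻¹ by rw [inv_neg, mul_neg, div_eq_mul_inv], mul_zpow]
  ring

theorem prod_theta_factors_eq_sum (hq : q ≠ 0) (hz : z ≠ 0) (n : ℕ) :
    ∏ j ∈ range n, ((1 - z * q ^ j) * (1 - q ^ (j + 1) / z)) =
      ∑ k ∈ range (2 * n + 1), gaussBinom q (2 * n) k * jacobiTerm q z (k - n) := by
  set X := -z * q ^ (-n : ℤ) with hX
  have hterm (k : ℕ) : jacobiTerm q z (-n) * (q ^ k.choose 2 * X ^ k) = jacobiTerm q z (k - n) := by
    rw [sub_eq_neg_add, jacobiTerm_add_natCast hq hz]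
    ring
  have hupper : ∏ j ∈ range n, (1 + X * q ^ (n + j)) = ∏ j ∈ range n, (1 - z * q ^ j) := by
    refine prod_congr rfl fun j _ => ?_
    rw [hX, pow_add, ← zpow_natCast q n, mul_assoc, ← mul_assoc (q ^ (-n : ℤ)), ← zpow_add₀ hq]
    simp [sub_eq_add_neg]
  have hlower : ∏ j ∈ range n, (1 + X * q ^ j) =
      q ^ n.choose 2 * X ^ n * ∏ j ∈ range n, (1 - q ^ (j + 1) / z) := by
    have hXn : X * q ^ n = -z := by simp [hX, hq]
    have hpow : ∏ j ∈ range n, q ^ j = q ^ n.choose 2 := by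
      rw [prod_pow_eq_pow_sum, sum_range_id, Nat.choose_two_right]
    calc ∏ j ∈ range n, (1 + X * q ^ j)
        = ∏ j ∈ range n, (X * q ^ j * (1 - q ^ (n - 1 - j + 1) / z)) := by
          refine prod_congr rfl fun j hj => ?_
          have hsplit : q ^ j * q ^ (n - 1 - j + 1) = q ^ n := by
            rw [← pow_add]; congr 1; have := mem_range.mp hj; omega
          field_simp
          linear_combination X * hsplit + hXn
      _ = q ^ n.choose 2 * X ^ n * ∏ j ∈ range n, (1 - q ^ (j + 1) / z) := by
          rw [prod_mul_distrib, prod_mul_distrib, prod_const, card_range, hpow,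
            prod_range_reflect (fun j => 1 - q ^ (j + 1) / z)]
          ring
  have hgauss := prod_one_add_mul_pow_eq_sum q (2 * n) X
  rw [two_mul, prod_range_add, hupper, hlower, ← two_mul] at hgauss
  calc ∏ j ∈ range n, ((1 - z * q ^ j) * (1 - q ^ (j + 1) / z))
      = jacobiTerm q z (-n) * (q ^ n.choose 2 * X ^ n) *
          ((∏ j ∈ range n, (1 - q ^ (j + 1) / z)) * ∏ j ∈ range n, (1 - z * q ^ j)) := by
        rw [hterm, sub_self, jacobiTerm_zero, one_mul, prod_mul_distrib, mul_comm]
    _ = jacobiTerm q z (-n) *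
          ∑ k ∈ range (2 * n + 1), gaussBinom q (2 * n) k * q ^ k.choose 2 * X ^ k := by
        rw [← hgauss]; ring
    _ = _ := by
        rw [mul_sum]
        exact sum_congr rfl fun k _ => by rw [← hterm]; ring

end Field

theorem multipliable_one_sub_of_summable_norm {R ι : Type*} [NormedCommRing R] [NormOneClass R]
    [CompleteSpace R] {f : ι → R} (hf : Summable fun i => ‖f i‖) :
    Multipliable fun i => 1 - f i := by
  simpa [sub_eq_add_neg] using multipliable_one_add_of_summable (f := fun i => -f i) (by simpa)

section Analysis

variable {K : Type*} [NormedField K] {q : K}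

theorem summable_norm_pow_succ (hq : ‖q‖ < 1) : Summable fun i : ℕ => ‖q ^ (i + 1)‖ :=
  (summable_norm_geometric_of_norm_lt_one hq).comp_injective (add_left_injective 1)

theorem one_sub_pow_succ_ne_zero (hq : ‖q‖ < 1) (i : ℕ) : 1 - q ^ (i + 1) ≠ 0 := by
  refine sub_ne_zero.mpr fun h => ?_
  have := congrArg norm h
  rw [norm_one, norm_pow] at this
  exact (pow_lt_one₀ (norm_nonneg q) hq i.succ_ne_zero).ne' this

theorem tprod_one_sub_pow_succ_ne_zero [CompleteSpace K] (hq : ‖q‖ < 1) :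
    ∏' i : ℕ, (1 - q ^ (i + 1)) ≠ 0 := by
  simpa [sub_eq_add_neg] using tprod_one_add_ne_zero_of_summable (f := fun i => -q ^ (i + 1))
    (fun i => by simpa [sub_eq_add_neg] using one_sub_pow_succ_ne_zero hq i)
    (by simpa using summable_norm_pow_succ hq)

theorem tendsto_qPochhammer [CompleteSpace K] (hq : ‖q‖ < 1) :
    Tendsto (qPochhammer q) atTop (𝓝 (∏' i : ℕ, (1 - q ^ (i + 1)))) :=
  (multipliable_one_sub_of_summable_norm (f := fun i : ℕ => q ^ (i + 1))
    (summable_norm_pow_succ hq)).hasProd.tendsto_prod_nat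

theorem qPochhammer_ne_zero (hq : ‖q‖ < 1) (n : ℕ) : qPochhammer q n ≠ 0 :=
  prod_ne_zero_iff.mpr fun i _ => one_sub_pow_succ_ne_zero hq i

theorem gaussBinom_eq_div (hq : ‖q‖ < 1) {n k : ℕ} (hk : k ≤ n) :
    gaussBinom q n k = qPochhammer q n / (qPochhammer q k * qPochhammer q (n - k)) :=
  eq_div_of_mul_eq (mul_ne_zero (qPochhammer_ne_zero hq k) (qPochhammer_ne_zero hq (n - k)))
    (by rw [← mul_assoc, gaussBinom_mul_qPochhammer_mul_qPochhammer q hk])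

/-- The `(q;q)_n` converge to a nonzero limit, so both they and their inverses are bounded. -/
theorem exists_norm_gaussBinom_le [CompleteSpace K] (hq : ‖q‖ < 1) :
    ∃ B, ∀ n k, ‖gaussBinom q n k‖ ≤ B := by
  have hP := tendsto_qPochhammer hq
  obtain ⟨C, hC⟩ := hP.norm.bddAbove_range
  obtain ⟨D, hD⟩ := (hP.inv₀ (tprod_one_sub_pow_succ_ne_zero hq)).norm.bddAbove_range
  have hC' (n : ℕ) : ‖qPochhammer q n‖ ≤ C := hC ⟨n, rfl⟩
  have hD' (n : ℕ) : ‖(qPochhammer q n)⁻¹‖ ≤ D := hD ⟨n, rfl⟩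
  have hC0 : 0 ≤ C := (norm_nonneg _).trans (hC' 0)
  have hD0 : 0 ≤ D := (norm_nonneg _).trans (hD' 0)
  refine ⟨C * D * D, fun n k => ?_⟩
  rcases le_or_gt k n with hk | hk
  · rw [gaussBinom_eq_div hq hk, div_eq_mul_inv, mul_inv, ← mul_assoc, norm_mul, norm_mul]
    exact mul_le_mul (mul_le_mul (hC' n) (hD' k) (norm_nonneg _) hC0) (hD' (n - k)) (norm_nonneg _)
      (mul_nonneg hC0 hD0)
  · rw [gaussBinom_eq_zero_of_lt q hk, norm_zero]
    exact mul_nonneg (mul_nonneg hC0 hD0) hD0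

theorem tendsto_gaussBinom_two_mul [CompleteSpace K] (hq : ‖q‖ < 1) (m : ℤ) :
    Tendsto (fun n : ℕ => gaussBinom q (2 * n) (m + n).toNat) atTop
      (𝓝 (∏' i : ℕ, (1 - q ^ (i + 1)))⁻¹) := by
  have hP := tendsto_qPochhammer hq
  have hP0 := tprod_one_sub_pow_succ_ne_zero hq
  have hlim {f : ℕ → ℕ} (hf : ∀ n, n - m.natAbs ≤ f n) :
      Tendsto (fun n => qPochhammer q (f n)) atTop (𝓝 (∏' i : ℕ, (1 - q ^ (i + 1)))) :=
    hP.comp (tendsto_atTop_mono hf (tendsto_sub_atTop_nat _))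
  have hquot := (hlim (f := (2 * ·)) (by omega)).div
    ((hlim (f := fun n => (m + n).toNat) (by omega)).mul
      (hlim (f := fun n => 2 * n - (m + n).toNat) (by omega))) (mul_ne_zero hP0 hP0)
  rw [div_mul_cancel_left₀ hP0] at hquot
  refine hquot.congr' ?_
  filter_upwards [eventually_ge_atTop m.natAbs] with n hn
  rw [gaussBinom_eq_div hq (by omega)]
  rfl

theorem summable_norm_jacobiTerm_natCast (hq : ‖q‖ < 1) (hq0 : q ≠ 0) {z : K} (hz : z ≠ 0) :
    Summable fun n : ℕ => ‖jacobiTerm q z n‖ := by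
  refine summable_of_ratio_norm_eventually_le (r := 1 / 2) (by norm_num) ?_
  have hratio : Tendsto (fun n : ℕ => ‖z‖ * ‖q‖ ^ n) atTop (𝓝 0) := by
    simpa using (tendsto_pow_atTop_nhds_zero_of_lt_one (norm_nonneg q) hq).const_mul ‖z‖
  filter_upwards [hratio.eventually_le_const (by norm_num : (0 : ℝ) < 1 / 2)] with n hn
  rw [norm_norm, norm_norm, Nat.cast_succ, jacobiTerm_add_one hq0 hz, norm_mul, norm_mul, norm_neg,
    zpow_natCast, norm_pow]
  nlinarith [norm_nonneg (jacobiTerm q z n)]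

theorem summable_norm_jacobiTerm (hq : ‖q‖ < 1) (hq0 : q ≠ 0) {z : K} (hz : z ≠ 0) :
    Summable fun m : ℤ => ‖jacobiTerm q z m‖ :=
  .of_nat_of_neg (summable_norm_jacobiTerm_natCast hq hq0 hz) (by
    simpa only [jacobiTerm_neg hq0] using
      summable_norm_jacobiTerm_natCast hq hq0 (div_ne_zero hq0 hz))

theorem tendsto_prod_theta_factors [CompleteSpace K] (hq : ‖q‖ < 1) (z : K) :
    Tendsto (fun n => ∏ j ∈ range n, ((1 - z * q ^ j) * (1 - q ^ (j + 1) / z))) atTop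
      (𝓝 (∏' j : ℕ, ((1 - z * q ^ j) * (1 - q ^ (j + 1) / z)))) := by
  have h₁ : Multipliable fun j : ℕ => 1 - z * q ^ j :=
    multipliable_one_sub_of_summable_norm (by
      simpa using (summable_norm_geometric_of_norm_lt_one hq).mul_left ‖z‖)
  have h₂ : Multipliable fun j : ℕ => 1 - q ^ (j + 1) / z :=
    multipliable_one_sub_of_summable_norm (by
      simpa [div_eq_mul_inv] using (summable_norm_pow_succ hq).mul_right ‖z‖⁻¹)
  exact (h₁.mul h₂).hasProd.tendsto_prod_nat

theorem tendsto_sum_gaussBinom_mul_jacobiTerm [CompleteSpace K] (hq : ‖q‖ < 1) (hq0 : q ≠ 0)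
    {z : K} (hz : z ≠ 0) :
    Tendsto (fun n : ℕ => ∑ k ∈ range (2 * n + 1), gaussBinom q (2 * n) k * jacobiTerm q z (k - n))
      atTop (𝓝 ((∏' i : ℕ, (1 - q ^ (i + 1)))⁻¹ * ∑' m : ℤ, jacobiTerm q z m)) := by
  obtain ⟨B, hB⟩ := exists_norm_gaussBinom_le hq
  let F (n : ℕ) (m : ℤ) : K :=
    if -(n : ℤ) ≤ m then gaussBinom q (2 * n) (m + n).toNat * jacobiTerm q z m else 0
  have hF (n : ℕ) :
      ∑' m, F n m = ∑ k ∈ range (2 * n + 1), gaussBinom q (2 * n) k * jacobiTerm q z (k - n) := by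
    have hshift : Function.Injective fun k : ℕ => (k : ℤ) - n := fun a b h => by simpa using h
    have hsupp : Function.support (F n) ⊆ Set.range fun k : ℕ => (k : ℤ) - n := fun m hm =>
      have : -(n : ℤ) ≤ m := by_contra fun h => hm (if_neg h)
      ⟨(m + n).toNat, show ((m + n).toNat : ℤ) - n = m by omega⟩
    rw [← hshift.tsum_eq hsupp]
    have hFk (k : ℕ) : F n (k - n) = gaussBinom q (2 * n) k * jacobiTerm q z (k - n) := by
      simp [F]
    simp_rw [hFk]
    exact tsum_eq_sum fun k hk => by
      rw [gaussBinom_eq_zero_of_lt q (by simpa using hk), zero_mul]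
  simp_rw [← hF, ← tsum_mul_left]
  refine tendsto_tsum_of_dominated_convergence (f := F)
    ((summable_norm_jacobiTerm hq hq0 hz).mul_left B) (fun m => ?_) (.of_forall fun n m => ?_)
  · refine ((tendsto_gaussBinom_two_mul hq m).mul_const (jacobiTerm q z m)).congr' ?_
    filter_upwards [eventually_ge_atTop m.natAbs] with n hn
    simp only [F, if_pos (by omega : -(n : ℤ) ≤ m)]
  · simp only [F]
    split_ifs
    · rw [norm_mul]; exact mul_le_mul_of_nonneg_right (hB _ _) (norm_nonneg _)
    · rw [norm_zero]; exact mul_nonneg ((norm_nonneg _).trans (hB 0 0)) (norm_nonneg _)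

theorem tsum_jacobiTerm_eq [CompleteSpace K] (hq : ‖q‖ < 1) (hq0 : q ≠ 0) {z : K} (hz : z ≠ 0) :
    ∑' m : ℤ, jacobiTerm q z m =
      (∏' j : ℕ, ((1 - z * q ^ j) * (1 - q ^ (j + 1) / z))) * ∏' i : ℕ, (1 - q ^ (i + 1)) := by
  have hsum := tendsto_sum_gaussBinom_mul_jacobiTerm hq hq0 hz
  simp_rw [← prod_theta_factors_eq_sum hq0 hz] at hsum
  rw [tendsto_nhds_unique (tendsto_prod_theta_factors hq z) hsum, mul_comm,
    mul_inv_cancel_left₀ (tprod_one_sub_pow_succ_ne_zero hq)]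

end Analysis

/-- The Jacobi triple product identity
`∑_{k∈ℤ} (-z)^k p^{k(k-1)/2} = θ(z;p) ∏_{j=1}^∞ (1 - p^j)`. -/
theorem jacobi_triple_product (p : ℝ) (hp0 : 0 < p) (hp1 : p < 1) (z : ℂ) (hz : z ≠ 0) :
    ∑' k : ℤ, (-z) ^ k * (p : ℂ) ^ (k * (k - 1) / 2) =
      theta p z * ∏' j : ℕ, (1 - (p : ℂ) ^ (j + 1)) :=
  tsum_jacobiTerm_eq (by rwa [Complex.norm_real, Real.norm_of_nonneg hp0.le])
    (Complex.ofReal_ne_zero.mpr hp0.ne') hz
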